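/- arXiv:2505.16560 — 2 statements merged into one kernel-verified Lean document; each statement's English description precedes it below -/
import Mathlib

section
/- Let A be a proper connective dg algebra, d ≥ 1, and X ∈ D^fd(A)^{≤0}. For any n ∈ ℕ there exists P ∈ per(A)^{[-n,0]} := add(A) ∗ add(A)[1] ∗ ⋯ ∗ add(A)[n] such that t^{>-n}P ≅ t^{>-n}X. In particular, every X ∈ H^d := D^fd(A)^{≤0} ∩ D^fd(A)^{>-d} is isomorphic to t^{>-d}P for some P ∈ per(A)^{[-d,0]}. -/
open CategoryTheory Category Limits Pretriangulated Triangulated ZeroObject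

universe w v u

namespace Paper

section Defs

variable {C : Type u} [Category.{v} C] [Preadditive C] [HasZeroObject C]
  [HasShift C ℤ] [∀ n : ℤ, (shiftFunctor C n).Additive] [Pretriangulated C]
  [HasFiniteBiproducts C] [HasBinaryBiproducts C]

/-- `X` lies in `add A`: it is a direct summand of a finite direct sum of copies of `A`. -/
def inAdd (A X : C) : Prop :=
  ∃ (n : ℕ) (s : X ⟶ ⨁ fun _ : Fin n => A) (p : (⨁ fun _ : Fin n => A) ⟶ X), s ≫ p = 𝟙 X

/-- The star operation `S ∗ T` on classes of objects of a (pre)triangulated category: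
objects `E` admitting a distinguished triangle `X ⟶ E ⟶ Y ⟶ X⟦1⟧` with `X ∈ S`, `Y ∈ T`. -/
def star (S T : Set C) : Set C :=
  {E | ∃ (X : C) (_ : X ∈ S) (Y : C) (_ : Y ∈ T) (f : X ⟶ E) (g : E ⟶ Y)
    (h : Y ⟶ X⟦(1 : ℤ)⟧), Triangle.mk f g h ∈ distTriang C}

/-- `add (A⟦i⟧)` as a class of objects. -/
def addShift (A : C) (i : ℤ) : Set C := {X | inAdd (A⟦i⟧) X}

/-- `per(A)^{[-n,0]} = add(A) ∗ add(A)[1] ∗ ⋯ ∗ add(A)[n]`. -/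
def perInterval (A : C) : ℕ → Set C
  | 0 => addShift A 0
  | n + 1 => star (perInterval A n) (addShift A (n + 1))

/-- `thick(DA)^{[0,n]} = add(DA)[-n] ∗ ⋯ ∗ add(DA)[-1] ∗ add(DA)`. -/
def coInterval (DA : C) : ℕ → Set C
  | 0 => addShift DA 0
  | n + 1 => star (addShift DA (-(n + 1 : ℕ))) (coInterval DA n)

/-- The extended heart `H^d = T^{≤ 0} ∩ T^{> -d}`. -/
def Hd (t : TStructure C) (d : ℕ) : Set C := {X | t.le 0 X ∧ t.ge (1 - (d : ℤ)) X}

/-- Projectivity in the extriangulated category given by an extension-closed class `S`: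
`E(P, X) = Hom(P, X⟦1⟧)` vanishes for all `X ∈ S`. -/
def projOn (S : Set C) (P : C) : Prop := ∀ X ∈ S, ∀ f : P ⟶ X⟦(1 : ℤ)⟧, f = 0

/-- Injectivity in the extriangulated category given by an extension-closed class `S`. -/
def injOn (S : Set C) (I : C) : Prop := ∀ X ∈ S, ∀ f : X ⟶ I⟦(1 : ℤ)⟧, f = 0

/-- `p : M ⟶ N` is a deflation for the extriangulated structure on the extension-closed
class `S`: it is the second map of a distinguished triangle with all terms in `S`. -/
def isDeflation (S : Set C) {M N : C} (p : M ⟶ N) : Prop :=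
  ∃ (L : C) (_ : L ∈ S) (f : L ⟶ M) (h : N ⟶ L⟦(1 : ℤ)⟧),
    Triangle.mk f p h ∈ distTriang C

/-- `i : L ⟶ M` is an inflation for the extriangulated structure on `S`. -/
def isInflation (S : Set C) {L M : C} (i : L ⟶ M) : Prop :=
  ∃ (N : C) (_ : N ∈ S) (p : M ⟶ N) (h : N ⟶ L⟦(1 : ℤ)⟧),
    Triangle.mk i p h ∈ distTriang C

/-- `f` factors through an object of `add W`. -/
def factorsThruAdd (W : C) {X Y : C} (f : X ⟶ Y) : Prop :=
  ∃ (Q : C) (_ : inAdd W Q) (a : X ⟶ Q) (b : Q ⟶ Y), f = a ≫ b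

/-- An indecomposable object: nonzero, and in any direct sum decomposition one summand
vanishes. -/
def Indec (X : C) : Prop :=
  ¬ IsZero X ∧ ∀ Y Z : C, Nonempty (X ≅ Y ⊞ Z) → IsZero Y ∨ IsZero Z

/-- Data of the truncation functor `t^{≥ n}`, left adjoint to the inclusion of `T^{≥ n}`,
together with its unit and the truncation triangles. -/
structure TruncGEData (t : TStructure C) (n : ℤ) where
  F : C ⥤ C
  η : 𝟭 C ⟶ F
  ge : ∀ X : C, t.ge n (F.obj X)
  tri : ∀ X : C, ∃ (Z : C) (_ : t.le (n - 1) Z) (f : Z ⟶ X) (h : F.obj X ⟶ Z⟦(1 : ℤ)⟧),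
    Triangle.mk f (η.app X) h ∈ distTriang C
  adj : ∀ (X W : C), t.ge n W → Function.Bijective (fun g : F.obj X ⟶ W => η.app X ≫ g)

/-- Data of the truncation functor `t^{≤ n}`, right adjoint to the inclusion of `T^{≤ n}`,
together with its counit and the truncation triangles. -/
structure TruncLEData (t : TStructure C) (n : ℤ) where
  F : C ⥤ C
  ε : F ⟶ 𝟭 C
  le : ∀ X : C, t.le n (F.obj X)
  tri : ∀ X : C, ∃ (Z : C) (_ : t.ge (n + 1) Z) (g : X ⟶ Z) (h : Z ⟶ (F.obj X)⟦(1 : ℤ)⟧),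
    Triangle.mk (ε.app X) g h ∈ distTriang C
  adj : ∀ (W X : C), t.le n W → Function.Bijective (fun g : W ⟶ F.obj X => g ≫ ε.app X)

/-- Membership in the thick subcategory generated by `A`. -/
inductive thickMem (A : C) : C → Prop
  | base : thickMem A A
  | zero : thickMem A 0
  | iso {X Y : C} : (X ≅ Y) → thickMem A X → thickMem A Y
  | shift (X : C) (n : ℤ) : thickMem A X → thickMem A (X⟦n⟧)
  | ext₂ {X Y Z : C} {f : X ⟶ Y} {g : Y ⟶ Z} {h : Z ⟶ X⟦(1 : ℤ)⟧} :
      (Triangle.mk f g h ∈ distTriang C) → thickMem A X → thickMem A Z → thickMem A Y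
  | smd {X Y : C} (s : X ⟶ Y) (p : Y ⟶ X) : s ≫ p = 𝟙 X → thickMem A Y → thickMem A X

end Defs

/-- Abstraction of the derived category `D^fd(A)` of a proper connective dg algebra `A`
over a field `k`, with its standard t-structure: `A` is connective (cohomology in
non-positive degrees), Hom-spaces are finite dimensional (properness), the standard
t-structure is bounded on `D^fd`, `A` is derived projective and `A` generates. -/
structure DGSetup (k : Type w) [Field k] (C : Type u) [Category.{v} C] [Preadditive C]
    [HasZeroObject C] [HasShift C ℤ] [∀ n : ℤ, (shiftFunctor C n).Additive]
    [Pretriangulated C] [Linear k C] where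
  t : TStructure C
  A : C
  connective : t.le 0 A
  homFinite : ∀ X Y : C, FiniteDimensional k (X ⟶ Y)
  bounded : ∀ X : C, ∃ a b : ℤ, t.ge a X ∧ t.le b X
  A_derived_projective : ∀ X : C, t.le 0 X → ∀ f : A ⟶ X⟦(1 : ℤ)⟧, f = 0
  generates : ∀ X : C, (∀ (n : ℤ) (f : A⟦n⟧ ⟶ X), f = 0) → IsZero X

section DG

variable {k : Type w} [Field k] {C : Type u} [Category.{v} C] [Preadditive C]
  [HasZeroObject C] [HasShift C ℤ] [∀ n : ℤ, (shiftFunctor C n).Additive]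
  [Pretriangulated C] [Linear k C]

/-- A derived injective object of `D^fd(A)^{≥ 0}`. -/
def DerivedInjective (S : DGSetup k C) (I : C) : Prop :=
  S.t.ge 0 I ∧ ∀ X : C, S.t.ge 0 X → ∀ f : X ⟶ I⟦(1 : ℤ)⟧, f = 0

variable [HasFiniteBiproducts C] [HasBinaryBiproducts C]

/-- The `k`-submodule of morphisms `X ⟶ Y` factoring through `add W`. -/
def addIdeal (k : Type w) [Field k] [Linear k C] (W : C) (X Y : C) : Submodule k (X ⟶ Y) :=
  Submodule.span k {f | factorsThruAdd W f}

end DG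

/-!
An object `D` is `≤ -m` exactly when `Hom(A⟦j⟧, D) = 0` for all `j < m`: one direction is derived
projectivity of `A`, the other follows from generation and boundedness by peeling off one degree at
a time. If `D ≤ -m`, a finite spanning family of `Hom(A⟦m⟧, D)` gives a map `Q ⟶ D` from
`Q ∈ add(A⟦m⟧)` that is surjective on `Hom(A⟦m⟧, -)`, so its cone is `≤ -m-1`. Starting from the
cover of `X ≤ 0` and repeatedly covering the cone `D` of the current approximation `P ⟶ X`
(extending `P` by the covering object, which keeps it in `per(A)^{[-n,0]}`) yields `P ⟶ X` with
cone `≤ -n-1`; such a map is inverted by `t^{≥ 1-n}`. On `H^d` the truncation `t^{≥ 1-d}` is the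
identity.
-/

section TStructure

variable {C : Type u} [Category.{v} C] [Preadditive C] [HasZeroObject C]
  [HasShift C ℤ] [∀ n : ℤ, (shiftFunctor C n).Additive] [Pretriangulated C]
  (t : TStructure C)

lemma isLE_biproduct {ι : Type*} (X : ι → C) [HasBiproduct X] (n : ℤ)
    (hX : ∀ i, t.IsLE (X i) n) : t.IsLE (⨁ X) n := by
  rw [t.isLE_iff_orthogonal n (n + 1) rfl]
  intro Y f _
  refine biproduct.hom_ext' _ _ fun i => ?_
  have := hX i
  rw [comp_zero, t.zero (biproduct.ι X i ≫ f) n (n + 1)]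

lemma bijective_comp_of_isLE_cone {P X D W : C} {φ : P ⟶ X} {c : X ⟶ D}
    {δ : D ⟶ P⟦(1 : ℤ)⟧} (hT : Triangle.mk φ c δ ∈ distTriang C) (a : ℤ)
    [t.IsLE D a] [t.IsGE W (a + 2)] :
    Function.Bijective (fun g : X ⟶ W => φ ≫ g) := by
  refine ⟨fun g₁ g₂ h => ?_, fun g => ?_⟩
  · obtain ⟨w, hw⟩ := Triangle.yoneda_exact₂ _ hT (g₁ - g₂)
      (show φ ≫ (g₁ - g₂) = 0 by rw [Preadditive.comp_sub, sub_eq_zero]; exact h)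
    have hw₀ : w = 0 := t.zero_of_isLE_of_isGE w a (a + 2) (by lia) ‹_› ‹_›
    rw [← sub_eq_zero, hw, hw₀]
    exact comp_zero
  · have : t.IsLE (D⟦(-1 : ℤ)⟧) (a + 1) := t.isLE_shift D a (-1) (a + 1)
    obtain ⟨f, hf⟩ := Triangle.yoneda_exact₂ _ (inv_rot_of_distTriang _ hT) g
      (t.zero_of_isLE_of_isGE _ (a + 1) (a + 2) (by lia) this ‹_›)
    exact ⟨f, hf.symm⟩

end TStructure

lemma exists_biproduct_desc_factorization {C : Type u} [Category.{v} C] [Preadditive C]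
    [HasFiniteBiproducts C] (R : Type w) [Semiring R] [Linear R C] (W Y : C)
    [Module.Finite R (W ⟶ Y)] :
    ∃ (m : ℕ) (p : (⨁ fun _ : Fin m => W) ⟶ Y), ∀ g : W ⟶ Y, ∃ s, g = s ≫ p := by
  obtain ⟨m, v, hv⟩ := Module.Finite.exists_fin (R := R) (M := W ⟶ Y)
  refine ⟨m, biproduct.desc v, fun g => ?_⟩
  obtain ⟨c, rfl⟩ :=
    (Submodule.mem_span_range_iff_exists_fun R).1 (hv ▸ Submodule.mem_top (x := g))
  exact ⟨biproduct.lift fun i => c i • 𝟙 W, by simp [biproduct.lift_desc]⟩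

section ConeComparison

variable {C : Type u} [Category.{v} C] [Preadditive C] [HasZeroObject C]
  [HasShift C ℤ] [∀ n : ℤ, (shiftFunctor C n).Additive] [Pretriangulated C]

lemma hom_cone_eq_zero_of_lift_of_injective {P X D W : C} {φ : P ⟶ X} {c : X ⟶ D}
    {δ : D ⟶ P⟦(1 : ℤ)⟧} (hT : Triangle.mk φ c δ ∈ distTriang C)
    (hlift : ∀ s : W ⟶ X, ∃ s', s = s' ≫ φ)
    (hinj : ∀ g : W ⟶ P⟦(1 : ℤ)⟧, g ≫ φ⟦(1 : ℤ)⟧' = 0 → g = 0) (f : W ⟶ D) : f = 0 := by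
  have h₁₂ : φ ≫ c = 0 := comp_distTriang_mor_zero₁₂ _ hT
  have h₃₁ : δ ≫ φ⟦(1 : ℤ)⟧' = 0 := comp_distTriang_mor_zero₃₁ _ hT
  obtain ⟨s, hs⟩ : ∃ s : W ⟶ X, f = s ≫ c :=
    Triangle.coyoneda_exact₃ _ hT f (hinj (f ≫ δ) (by rw [assoc, h₃₁, comp_zero]))
  obtain ⟨s', rfl⟩ := hlift s
  rw [hs, assoc, h₁₂, comp_zero]

/- Here `P` is the extension of `Q` by `P₀` classified by `q ≫ δ₀`, and `(𝟙, φ, q)` is a morphism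
from its triangle to that of `φ₀`. The octahedral axiom would identify the cone of `φ` with `Z`; as `C` is only pretriangulated,
we show instead that `Hom(W, -)` kills the cone of `φ` as soon as it kills `Z`. -/
variable {P₀ X D₀ Q Z P W : C} {φ₀ : P₀ ⟶ X} {c₀ : X ⟶ D₀} {δ₀ : D₀ ⟶ P₀⟦(1 : ℤ)⟧}
  {q : Q ⟶ D₀} {z : D₀ ⟶ Z} {δQ : Z ⟶ Q⟦(1 : ℤ)⟧} {a : P₀ ⟶ P} {b : P ⟶ Q} {φ : P ⟶ X}

lemma exists_lift_of_hom_eq_zero (hT₀ : Triangle.mk φ₀ c₀ δ₀ ∈ distTriang C)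
    (hTQ : Triangle.mk q z δQ ∈ distTriang C) (hTP : Triangle.mk a b (q ≫ δ₀) ∈ distTriang C)
    (ha : a ≫ φ = φ₀) (hb : b ≫ q = φ ≫ c₀) (hW : ∀ u : W ⟶ Z, u = 0) (s : W ⟶ X) :
    ∃ s', s = s' ≫ φ := by
  have h₂₃ : c₀ ≫ δ₀ = 0 := comp_distTriang_mor_zero₂₃ _ hT₀
  obtain ⟨u, hu⟩ : ∃ u : W ⟶ Q, s ≫ c₀ = u ≫ q :=
    Triangle.coyoneda_exact₂ _ hTQ (s ≫ c₀) (hW _)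
  obtain ⟨v, hv⟩ : ∃ v : W ⟶ P, u = v ≫ b :=
    Triangle.coyoneda_exact₃ _ hTP u
      (show u ≫ q ≫ δ₀ = 0 by rw [← reassoc_of% hu, h₂₃, comp_zero])
  obtain ⟨r, hr⟩ : ∃ r : W ⟶ P₀, s - v ≫ φ = r ≫ φ₀ :=
    Triangle.coyoneda_exact₂ _ hT₀ (s - v ≫ φ)
      (show (s - v ≫ φ) ≫ c₀ = 0 by
        rw [Preadditive.sub_comp, assoc, ← hb, ← assoc, ← hv, hu, sub_self])
  exact ⟨v + r ≫ a, by rw [Preadditive.add_comp, assoc, ha, ← hr, add_sub_cancel]⟩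

lemma eq_zero_of_comp_shift_map_eq_zero (hT₀ : Triangle.mk φ₀ c₀ δ₀ ∈ distTriang C)
    (hTQ : Triangle.mk q z δQ ∈ distTriang C) (hTP : Triangle.mk a b (q ≫ δ₀) ∈ distTriang C)
    (ha : a ≫ φ = φ₀) (hb : b ≫ q = φ ≫ c₀) (hW : ∀ u : W ⟶ Z, u = 0)
    (g : W ⟶ P⟦(1 : ℤ)⟧) (hg : g ≫ φ⟦(1 : ℤ)⟧' = 0) : g = 0 := by
  have hgb : g ≫ b⟦(1 : ℤ)⟧' = 0 := by
    obtain ⟨u, hu⟩ : ∃ u : W ⟶ Z, g ≫ b⟦(1 : ℤ)⟧' = u ≫ δQ :=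
      Triangle.coyoneda_exact₂ _ (rot_of_distTriang _ (rot_of_distTriang _ hTQ)) _
        (show (g ≫ b⟦(1 : ℤ)⟧') ≫ (-q⟦(1 : ℤ)⟧') = 0 by
          rw [Preadditive.comp_neg, assoc, ← Functor.map_comp, hb, Functor.map_comp,
            reassoc_of% hg, zero_comp, neg_zero])
    rw [hu, hW u, zero_comp]
  obtain ⟨r, hr⟩ : ∃ r : W ⟶ P₀⟦(1 : ℤ)⟧, g = r ≫ a⟦(1 : ℤ)⟧' := by
    obtain ⟨r, hr⟩ : ∃ r : W ⟶ P₀⟦(1 : ℤ)⟧, g = r ≫ (-a⟦(1 : ℤ)⟧') :=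
      Triangle.coyoneda_exact₃ _ (rot_of_distTriang _ (rot_of_distTriang _ hTP)) g
        (show g ≫ (-b⟦(1 : ℤ)⟧') = 0 by rw [Preadditive.comp_neg, hgb, neg_zero])
    exact ⟨-r, by rw [hr, Preadditive.comp_neg, Preadditive.neg_comp]⟩
  obtain ⟨e, he⟩ : ∃ e : W ⟶ D₀, r = e ≫ δ₀ :=
    Triangle.coyoneda_exact₃ _ (rot_of_distTriang _ hT₀) r (show r ≫ (-φ₀⟦(1 : ℤ)⟧') = 0 by
      rw [Preadditive.comp_neg, ← ha, Functor.map_comp, ← reassoc_of% hr, hg, neg_zero])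
  obtain ⟨u, rfl⟩ : ∃ u : W ⟶ Q, e = u ≫ q := Triangle.coyoneda_exact₂ _ hTQ e (hW _)
  have h₃₁ : (q ≫ δ₀) ≫ a⟦(1 : ℤ)⟧' = 0 := comp_distTriang_mor_zero₃₁ _ hTP
  rw [hr, he, assoc, assoc, ← assoc q, h₃₁, comp_zero]

end ConeComparison

lemma isIso_of_surjective_comp_of_injective_comp {C : Type u} [Category.{v} C] {X Y : C}
    (f : X ⟶ Y) (hX : Function.Surjective (fun g : Y ⟶ X => f ≫ g))
    (hY : Function.Injective (fun g : Y ⟶ Y => f ≫ g)) : IsIso f := by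
  obtain ⟨g, hg⟩ := hX (𝟙 X)
  refine ⟨g, hg, hY ?_⟩
  change f ≫ g ≫ f = f ≫ 𝟙 Y
  rw [reassoc_of% (hg : f ≫ g = 𝟙 X), comp_id]

namespace TruncGEData

variable {C : Type u} [Category.{v} C] [Preadditive C] [HasZeroObject C]
  [HasShift C ℤ] [∀ n : ℤ, (shiftFunctor C n).Additive] [Pretriangulated C]
  {t : TStructure C} {n : ℤ} (T : TruncGEData t n)

lemma isIso_η_app {X : C} (hX : t.ge n X) : IsIso (T.η.app X) :=
  isIso_of_surjective_comp_of_injective_comp _ (T.adj X X hX).2 (T.adj X _ (T.ge X)).1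

lemma isIso_map_of_bijective_comp {P X : C} (φ : P ⟶ X)
    (hφ : ∀ W, t.ge n W → Function.Bijective (fun g : X ⟶ W => φ ≫ g)) :
    IsIso (T.F.map φ) := by
  have key : ∀ W, t.ge n W → Function.Bijective (fun g : T.F.obj X ⟶ W => T.F.map φ ≫ g) := by
    intro W hW
    have hcomm : ((fun g : T.F.obj P ⟶ W => T.η.app P ≫ g) ∘ fun g => T.F.map φ ≫ g) =
        (fun g : X ⟶ W => φ ≫ g) ∘ fun g => T.η.app X ≫ g := by
      funext g
      simp [← T.η.naturality_assoc]
    exact ((T.adj P W hW).of_comp_iff' _).1 (hcomm ▸ (hφ W hW).comp (T.adj X W hW))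
  exact isIso_of_surjective_comp_of_injective_comp _ (key _ (T.ge P)).2 (key _ (T.ge X)).1

end TruncGEData

namespace DGSetup

variable {k : Type w} [Field k] {C : Type u} [Category.{v} C] [Preadditive C]
  [HasZeroObject C] [HasShift C ℤ] [∀ n : ℤ, (shiftFunctor C n).Additive]
  [Pretriangulated C] [Linear k C] (S : DGSetup k C)

lemma isLE_shift_A (j : ℤ) : S.t.IsLE (S.A⟦j⟧) (-j) :=
  have : S.t.IsLE S.A 0 := ⟨S.connective⟩
  S.t.isLE_shift S.A 0 j (-j)

lemma hom_A_eq_zero {U : C} [S.t.IsLE U (-1)] (f : S.A ⟶ U) : f = 0 := by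
  let e := (shiftFunctorCompIsoId C (-1 : ℤ) 1 (by norm_num)).app U
  have : S.t.IsLE (U⟦(-1 : ℤ)⟧) 0 := S.t.isLE_shift U (-1) (-1) 0
  have h := S.A_derived_projective _ (S.t.le_of_isLE _ 0) (f ≫ e.inv)
  simpa using h =≫ e.hom

lemma hom_shift_A_eq_zero (j : ℤ) {V : C} (n : ℤ) [S.t.IsLE V n] (hn : n < -j)
    (f : S.A⟦j⟧ ⟶ V) : f = 0 := by
  have : S.t.IsLE (V⟦-j⟧) (n + j) := S.t.isLE_shift V n (-j) (n + j)
  have : S.t.IsLE (V⟦-j⟧) (-1) := S.t.isLE_of_le _ (n + j) (-1)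
  let ε := (shiftFunctorCompIsoId C j (-j) (add_neg_cancel j)).app S.A
  have h : ε.inv ≫ f⟦-j⟧' = 0 := S.hom_A_eq_zero _
  apply (shiftFunctor C (-j)).map_injective
  rw [Functor.map_zero, ← cancel_epi ε.inv, h, comp_zero]

lemma isLE_sub_one_of_hom_shift_A_eq_zero (n : ℤ) {Z : C} [S.t.IsLE Z n]
    (h : ∀ f : S.A⟦-n⟧ ⟶ Z, f = 0) : S.t.IsLE Z (n - 1) := by
  obtain ⟨X, Y, hX, hY, f, g, δ, hT⟩ := S.t.exists_triangle Z (n - 1) n (by lia)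
  have : S.t.IsLE X (n - 1) := ⟨hX⟩
  have : S.t.IsGE Y n := ⟨hY⟩
  have : S.t.IsLE (X⟦(1 : ℤ)⟧) (n - 2) := S.t.isLE_shift X (n - 1) 1 (n - 2)
  have : S.t.IsLE Y n := S.t.isLE₂ _ (rot_of_distTriang _ hT) n ‹S.t.IsLE Z n›
    (S.t.isLE_of_le (X⟦(1 : ℤ)⟧) (n - 2) n)
  have hY : IsZero Y := S.generates Y fun m y => by
    rcases lt_or_ge (-n) m with hm | hm
    · have := S.isLE_shift_A m
      exact S.t.zero y (-m) n
    · obtain ⟨x, rfl⟩ : ∃ x : S.A⟦m⟧ ⟶ Z, y = x ≫ g :=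
        Triangle.coyoneda_exact₃ _ hT y (S.hom_shift_A_eq_zero m (n - 2) (by lia) (y ≫ δ))
      obtain hm | rfl := hm.lt_or_eq
      · rw [S.hom_shift_A_eq_zero m n (by lia) x, zero_comp]
      · rw [h x, zero_comp]
  have : IsIso f := (Triangle.isZero₃_iff_isIso₁ _ hT).1 hY
  exact S.t.isLE_of_iso (asIso f) (n - 1)

lemma isLE_neg_iff_hom_shift_A_eq_zero (m : ℤ) (Z : C) :
    S.t.IsLE Z (-m) ↔ ∀ j < m, ∀ f : S.A⟦j⟧ ⟶ Z, f = 0 := by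
  refine ⟨fun _ j hj f => S.hom_shift_A_eq_zero j (-m) (by lia) f, fun h => ?_⟩
  obtain ⟨-, b, -, hb⟩ := S.bounded Z
  have : S.t.IsLE Z b := ⟨hb⟩
  suffices ∀ n ≤ max b (-m), -m ≤ n → S.t.IsLE Z n from this (-m) (le_max_right _ _) le_rfl
  intro n hn
  induction n, hn using Int.leInductionDown with
  | base => exact fun _ => S.t.isLE_of_le Z b _ (le_max_left _ _)
  | pred n _ ih =>
    intro hmn
    have := ih (by lia)
    simpa using S.isLE_sub_one_of_hom_shift_A_eq_zero n (h (-n) (by lia))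

variable [HasFiniteBiproducts C]

lemma exists_distTriang_addShift_isLE (i : ℤ) (Y : C) [S.t.IsLE Y (-i)] :
    ∃ Q ∈ addShift S.A i, ∃ (Z : C) (q : Q ⟶ Y) (z : Y ⟶ Z) (δ : Z ⟶ Q⟦(1 : ℤ)⟧),
      Triangle.mk q z δ ∈ distTriang C ∧ S.t.IsLE Z (-(i + 1)) := by
  have := S.homFinite (S.A⟦i⟧) Y
  obtain ⟨m, p, hp⟩ := exists_biproduct_desc_factorization k (S.A⟦i⟧) Y
  obtain ⟨Z, z, δ, hT⟩ := distinguished_cocone_triangle p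
  have : S.t.IsLE (⨁ fun _ : Fin m => S.A⟦i⟧) (-i) :=
    isLE_biproduct S.t _ _ fun _ => S.isLE_shift_A i
  have : S.t.IsLE ((⨁ fun _ : Fin m => S.A⟦i⟧)⟦(1 : ℤ)⟧) (-(i + 1)) := S.t.isLE_shift _ (-i) 1 _
  refine ⟨_, ⟨m, 𝟙 _, 𝟙 _, comp_id _⟩, Z, p, z, δ, hT, ?_⟩
  rw [S.isLE_neg_iff_hom_shift_A_eq_zero]
  intro j hj f
  obtain ⟨g, rfl⟩ : ∃ g : S.A⟦j⟧ ⟶ Y, f = g ≫ z :=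
    Triangle.coyoneda_exact₃ _ hT f (S.hom_shift_A_eq_zero j (-(i + 1)) (by lia) (f ≫ δ))
  obtain hj | rfl := (Int.lt_add_one_iff.1 hj).lt_or_eq
  · rw [S.hom_shift_A_eq_zero j (-i) (by lia) g, zero_comp]
  · obtain ⟨s, rfl⟩ := hp g
    have hpz : p ≫ z = 0 := comp_distTriang_mor_zero₁₂ _ hT
    rw [assoc, hpz, comp_zero]

lemma exists_star_addShift_distTriang (𝒳 : Set C) (m : ℤ) {P₀ X D₀ : C} (hP₀ : P₀ ∈ 𝒳)
    {φ₀ : P₀ ⟶ X} {c₀ : X ⟶ D₀} {δ₀ : D₀ ⟶ P₀⟦(1 : ℤ)⟧}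
    (hT₀ : Triangle.mk φ₀ c₀ δ₀ ∈ distTriang C) [S.t.IsLE D₀ (-m)] :
    ∃ P ∈ star 𝒳 (addShift S.A m), ∃ (φ : P ⟶ X) (D : C) (c : X ⟶ D) (δ : D ⟶ P⟦(1 : ℤ)⟧),
      Triangle.mk φ c δ ∈ distTriang C ∧ S.t.IsLE D (-(m + 1)) := by
  obtain ⟨Q, hQ, Z, q, z, δQ, hTQ, hZ⟩ := S.exists_distTriang_addShift_isLE m D₀
  obtain ⟨P, a, b, hTP⟩ := distinguished_cocone_triangle₂ (q ≫ δ₀)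
  obtain ⟨φ, ha, hb⟩ : ∃ φ : P ⟶ X, a ≫ φ = 𝟙 P₀ ≫ φ₀ ∧ b ≫ q = φ ≫ c₀ :=
    complete_distinguished_triangle_morphism₂ _ _ hTP hT₀ (𝟙 P₀) q
      (show (q ≫ δ₀) ≫ (𝟙 P₀)⟦(1 : ℤ)⟧' = q ≫ δ₀ by
        rw [CategoryTheory.Functor.map_id, comp_id])
  rw [id_comp] at ha
  obtain ⟨D, c, δ, hT⟩ := distinguished_cocone_triangle φ
  refine ⟨P, ⟨P₀, hP₀, Q, hQ, a, b, q ≫ δ₀, hTP⟩, φ, D, c, δ, hT, ?_⟩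
  rw [S.isLE_neg_iff_hom_shift_A_eq_zero]
  intro j hj
  have hW : ∀ u : S.A⟦j⟧ ⟶ Z, u = 0 := S.hom_shift_A_eq_zero j (-(m + 1)) (by lia)
  exact hom_cone_eq_zero_of_lift_of_injective hT
    (exists_lift_of_hom_eq_zero hT₀ hTQ hTP ha hb hW)
    (eq_zero_of_comp_shift_map_eq_zero hT₀ hTQ hTP ha hb hW)

lemma exists_perInterval_distTriang (n : ℕ) (X : C) [S.t.IsLE X 0] :
    ∃ P ∈ perInterval S.A n, ∃ (φ : P ⟶ X) (D : C) (c : X ⟶ D) (δ : D ⟶ P⟦(1 : ℤ)⟧),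
      Triangle.mk φ c δ ∈ distTriang C ∧ S.t.IsLE D (-(n + 1)) := by
  induction n with
  | zero =>
    have : S.t.IsLE X (-0) := by simpa
    obtain ⟨Q, hQ, Z, q, z, δ, hT, hZ⟩ := S.exists_distTriang_addShift_isLE 0 X
    exact ⟨Q, hQ, q, Z, z, δ, hT, by simpa using hZ⟩
  | succ n ih =>
    obtain ⟨P, hP, φ, D, c, δ, hT, hD⟩ := ih
    have := S.exists_star_addShift_distTriang (perInterval S.A n) (n + 1) hP hT
    push_cast
    exact this

lemma exists_perInterval_isIso_map (n : ℕ) (Tn : TruncGEData S.t (1 - n)) (X : C)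
    (hX : S.t.le 0 X) : ∃ P ∈ perInterval S.A n, ∃ φ : P ⟶ X, IsIso (Tn.F.map φ) := by
  have : S.t.IsLE X 0 := ⟨hX⟩
  obtain ⟨P, hP, φ, D, c, δ, hT, hD⟩ := S.exists_perInterval_distTriang n X
  refine ⟨P, hP, φ, Tn.isIso_map_of_bijective_comp φ fun W hW => ?_⟩
  have : S.t.IsGE W (-(n + 1) + 2) := ⟨by convert hW using 2; ring⟩
  exact bijective_comp_of_isLE_cone S.t hT (-(n + 1))

end DGSetup

variable {C : Type u} [Category.{v} C] [Preadditive C] [HasZeroObject C]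
  [HasShift C ℤ] [∀ n : ℤ, (shiftFunctor C n).Additive] [Pretriangulated C]
  [HasFiniteBiproducts C] [HasBinaryBiproducts C]
  {k : Type w} [Field k] [Linear k C]

/-- For every `n` and `X ∈ D^fd(A)^{≤0}` there is
`P ∈ per(A)^{[-n,0]}` with `t^{>-n} P ≅ t^{>-n} X`; in particular every
`X ∈ H^d` is isomorphic to `t^{>-d} P` for some `P ∈ per(A)^{[-d,0]}`. -/
theorem stmt10 (S : DGSetup k C) (T : ∀ n : ℕ, TruncGEData S.t (1 - (n : ℤ))) :
    (∀ (n : ℕ) (X : C), S.t.le 0 X →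
      ∃ P ∈ perInterval S.A n, Nonempty ((T n).F.obj P ≅ (T n).F.obj X)) ∧
    (∀ d : ℕ, 1 ≤ d → S.A ∈ Hd S.t d → ∀ X ∈ Hd S.t d,
      ∃ P ∈ perInterval S.A d, Nonempty ((T d).F.obj P ≅ X)) := by
  refine ⟨fun n X hX => ?_, fun d _ _ X hX => ?_⟩
  · obtain ⟨P, hP, φ, _⟩ := S.exists_perInterval_isIso_map n (T n) X hX
    exact ⟨P, hP, ⟨asIso ((T n).F.map φ)⟩⟩
  · obtain ⟨P, hP, φ, _⟩ := S.exists_perInterval_isIso_map d (T d) X hX.1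
    have := (T d).isIso_η_app hX.2
    exact ⟨P, hP, ⟨asIso ((T d).F.map φ) ≪≫ (asIso ((T d).η.app X)).symm⟩⟩

end Paper
end

section
/- Let A be a proper connective dg algebra and d ≥ 1 with A ∈ H^d. The truncation functor t^{>-d}: per(A)^{[-d,0]} → H^d is full and dense, and a morphism f: P → P' in per(A)^{[-d,0]} satisfies t^{>-d}(f) = 0 if and only if f factors through an object of add(A[d]). Consequently, t^{>-d} induces an equivalence per(A)^{[-d,0]}/add(A[d]) ≃ H^d. -/
open CategoryTheory Category Limits Pretriangulated Triangulated ZeroObject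

universe w v u

namespace Paper

/-! `Hom(A⟦m⟧, -)` vanishes on `t.le (-m-1)` by derived projectivity of `A` and on
`t.ge (1-m)` by connectivity. For `P ∈ per(A)^{[-d,0]}` the truncation triangle
`Z ⟶ P ⟶ t^{>-d} P` has `Z ≤ -d`, so every map `P ⟶ Z⟦1⟧` vanishes (fullness) and every map
`P ⟶ Z` factors through the top layer `add(A⟦d⟧)` of `P` (the kernel).

For density, `X ∈ H^d` is approximated by `π : P ⟶ X` built layer by layer: at step `r` one
attaches a finite cover `⨁ A⟦r⟧ ⟶ cone(π)` of `Hom(A⟦r⟧, cone(π))`, which exists because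
Hom-spaces are finite dimensional. Then `Hom(A⟦m⟧, π)` is onto for `m ≤ d` and injective for
`m < d`, so the induced `t^{>-d} P ⟶ X` is bijective on every `Hom(A⟦m⟧, -)`, and its cone
vanishes because `A` generates. -/

section Triangles

variable {C : Type u} [Category.{v} C] [Preadditive C] [HasZeroObject C]
  [HasShift C ℤ] [∀ n : ℤ, (shiftFunctor C n).Additive] [Pretriangulated C]

def HomSurj (B : C) {P X : C} (π : P ⟶ X) : Prop := ∀ χ : B ⟶ X, ∃ ξ : B ⟶ P, χ = ξ ≫ π

def HomInj (B : C) {P X : C} (π : P ⟶ X) : Prop := ∀ ψ : B ⟶ P, ψ ≫ π = 0 → ψ = 0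

variable {P X Cn : C} {π : P ⟶ X} {ρ : X ⟶ Cn} {σ : Cn ⟶ P⟦(1 : ℤ)⟧}

lemma exists_shift_map_eq_comp (hT : Triangle.mk π ρ σ ∈ distTriang C) {B : C} (ψ : B ⟶ P)
    (hψ : ψ ≫ π = 0) : ∃ c : B⟦(1 : ℤ)⟧ ⟶ Cn, ψ⟦(1 : ℤ)⟧' = c ≫ σ :=
  Triangle.coyoneda_exact₃ _ (rot_of_distTriang _ hT) (ψ⟦(1 : ℤ)⟧') (by
    change ψ⟦(1 : ℤ)⟧' ≫ (-π⟦(1 : ℤ)⟧') = 0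
    rw [Preadditive.comp_neg, ← Functor.map_comp, hψ, Functor.map_zero, neg_zero])

lemma cone_hom_eq_zero (hT : Triangle.mk π ρ σ ∈ distTriang C) {B₀ B₁ : C}
    (e : B₁ ≅ B₀⟦(1 : ℤ)⟧) (hsurj : HomSurj B₁ π) (hinj : HomInj B₀ π) (φ : B₁ ⟶ Cn) :
    φ = 0 := by
  have h31 : σ ≫ π⟦(1 : ℤ)⟧' = 0 := comp_distTriang_mor_zero₃₁ _ hT
  obtain ⟨ψ, hψ⟩ := (shiftFunctor C (1 : ℤ)).map_surjective (e.inv ≫ φ ≫ σ)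
  have hψπ : ψ ≫ π = 0 := (shiftFunctor C (1 : ℤ)).map_injective (by
    rw [Functor.map_comp, hψ, assoc, assoc, h31, comp_zero, comp_zero, Functor.map_zero])
  have hφσ : φ ≫ σ = 0 := by
    rw [← e.hom_inv_id_assoc (φ ≫ σ), ← hψ, hinj ψ hψπ, Functor.map_zero, comp_zero]
  obtain ⟨χ, rfl⟩ : ∃ χ : B₁ ⟶ X, φ = χ ≫ ρ := Triangle.coyoneda_exact₃ _ hT φ hφσ
  obtain ⟨ξ, rfl⟩ := hsurj χ
  have h12 : π ≫ ρ = 0 := comp_distTriang_mor_zero₁₂ _ hT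
  rw [assoc, h12, comp_zero]

variable {P' Q : C} {α : P ⟶ P'} {β : P' ⟶ Q} {g : Q ⟶ Cn} {π' : P' ⟶ X}

lemma homSurj_of_cover (hT : Triangle.mk π ρ σ ∈ distTriang C)
    (hT' : Triangle.mk α β (g ≫ σ) ∈ distTriang C) (hαπ : α ≫ π' = π)
    (hβg : β ≫ g = π' ≫ ρ) {B : C} (hg : HomSurj B g) : HomSurj B π' := by
  intro χ
  have h23 : ρ ≫ σ = 0 := comp_distTriang_mor_zero₂₃ _ hT
  obtain ⟨ι, hι⟩ := hg (χ ≫ ρ)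
  obtain ⟨s, rfl⟩ : ∃ s : B ⟶ P', ι = s ≫ β := Triangle.coyoneda_exact₃ _ hT' ι (by
    change ι ≫ g ≫ σ = 0
    rw [← assoc, ← hι, assoc, h23, comp_zero])
  obtain ⟨ξ, hξ⟩ : ∃ ξ : B ⟶ P, χ - s ≫ π' = ξ ≫ π :=
    Triangle.coyoneda_exact₂ _ hT (χ - s ≫ π') (by
      change (χ - s ≫ π') ≫ ρ = 0
      rw [Preadditive.sub_comp, assoc, ← hβg, ← assoc, ← hι, sub_self])
  refine ⟨s + ξ ≫ α, ?_⟩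
  rw [Preadditive.add_comp, assoc, hαπ, ← hξ]
  abel

lemma homInj_of_cover (hT : Triangle.mk π ρ σ ∈ distTriang C)
    (hT' : Triangle.mk α β (g ≫ σ) ∈ distTriang C) (hαπ : α ≫ π' = π) {B₀ B₁ : C}
    (e : B₁ ≅ B₀⟦(1 : ℤ)⟧) (hg : HomSurj B₁ g) (hQ : ∀ φ : B₀ ⟶ Q, φ = 0) :
    HomInj B₀ π' := by
  intro ψ hψ
  have h31 : g ≫ σ ≫ α⟦(1 : ℤ)⟧' = 0 := by
    rw [← assoc]
    exact comp_distTriang_mor_zero₃₁ _ hT'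
  obtain ⟨ψ₀, rfl⟩ : ∃ ψ₀ : B₀ ⟶ P, ψ = ψ₀ ≫ α := Triangle.coyoneda_exact₂ _ hT' ψ (hQ _)
  obtain ⟨c, hc⟩ := exists_shift_map_eq_comp hT ψ₀ (by rw [← hαπ, ← assoc, hψ])
  obtain ⟨ι, hι⟩ := hg (e.hom ≫ c)
  have hc' : c = e.inv ≫ ι ≫ g := by rw [← hι, e.inv_hom_id_assoc]
  apply (shiftFunctor C (1 : ℤ)).map_injective
  rw [Functor.map_comp, hc, hc', Functor.map_zero]
  simp only [assoc]
  rw [h31, comp_zero, comp_zero]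

end Triangles

section Add

variable {C : Type u} [Category.{v} C] [Preadditive C] [HasFiniteBiproducts C]

lemma inAdd_biproduct (B : C) (n : ℕ) : inAdd B (⨁ fun _ : Fin n => B) :=
  ⟨n, 𝟙 _, 𝟙 _, Category.comp_id _⟩

lemma hom_eq_zero_of_inAdd {B Q W : C} (hQ : inAdd B Q) (hB : ∀ φ : B ⟶ W, φ = 0)
    (f : Q ⟶ W) : f = 0 := by
  obtain ⟨n, s, p, hsp⟩ := hQ
  have hp : p ≫ f = 0 := biproduct.hom_ext' _ _ fun j => by rw [comp_zero, ← assoc]; exact hB _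
  rw [← Category.id_comp f, ← hsp, assoc, hp, comp_zero]

lemma exists_homSurj_biproduct (k : Type w) [Field k] [Linear k C] (B Y : C)
    [FiniteDimensional k (B ⟶ Y)] :
    ∃ (N : ℕ) (g : (⨁ fun _ : Fin N => B) ⟶ Y), HomSurj B g := by
  let b := Module.finBasis k (B ⟶ Y)
  refine ⟨_, biproduct.desc fun j => b j, fun φ => ⟨biproduct.lift fun j => b.repr φ j • 𝟙 B, ?_⟩⟩
  simp only [biproduct.lift_desc, Linear.smul_comp, Category.id_comp]
  exact (b.sum_repr φ).symm

end Add

section PerInterval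

variable {C : Type u} [Category.{v} C] [Preadditive C] [HasZeroObject C]
  [HasShift C ℤ] [∀ n : ℤ, (shiftFunctor C n).Additive] [Pretriangulated C]
  [HasFiniteBiproducts C]

lemma hom_eq_zero_of_mem_perInterval {A W : C} {n : ℕ}
    (hW : ∀ m : ℤ, 0 ≤ m → m ≤ n → ∀ φ : A⟦m⟧ ⟶ W, φ = 0) {P : C}
    (hP : P ∈ perInterval A n) (f : P ⟶ W) : f = 0 := by
  induction n generalizing P with
  | zero => exact hom_eq_zero_of_inAdd hP (hW 0 le_rfl le_rfl) f
  | succ n ih =>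
    obtain ⟨P₁, hP₁, Y, hY, _, v, _, hT⟩ := hP
    obtain ⟨f', rfl⟩ : ∃ f' : Y ⟶ W, f = v ≫ f' :=
      Triangle.yoneda_exact₂ _ hT f (ih (fun m h0 hm => hW m h0 (by omega)) hP₁ _)
    rw [hom_eq_zero_of_inAdd hY (hW _ (by omega) (by omega)) f', comp_zero]

lemma factorsThruAdd_of_mem_perInterval {A Z : C} {n : ℕ}
    (hZ : ∀ m : ℤ, 0 ≤ m → m < n → ∀ φ : A⟦m⟧ ⟶ Z, φ = 0) {P : C}
    (hP : P ∈ perInterval A n) (e : P ⟶ Z) : factorsThruAdd (A⟦(n : ℤ)⟧) e := by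
  cases n with
  | zero => exact ⟨P, hP, 𝟙 P, e, (Category.id_comp e).symm⟩
  | succ n =>
    obtain ⟨P₁, hP₁, Y, hY, _, v, _, hT⟩ := hP
    obtain ⟨b, rfl⟩ : ∃ b : Y ⟶ Z, e = v ≫ b := Triangle.yoneda_exact₂ _ hT e
      (hom_eq_zero_of_mem_perInterval (fun m h0 hm => hZ m h0 (by omega)) hP₁ _)
    exact ⟨Y, by rwa [Nat.cast_succ], v, b, rfl⟩

end PerInterval

namespace DGSetup

variable {k : Type w} [Field k] {C : Type u} [Category.{v} C] [Preadditive C]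
  [HasZeroObject C] [HasShift C ℤ] [∀ n : ℤ, (shiftFunctor C n).Additive]
  [Pretriangulated C] [Linear k C] (S : DGSetup k C)

lemma hom_eq_zero_of_le_neg_one {V : C} (hV : S.t.le (-1) V) (f : S.A ⟶ V) : f = 0 := by
  let e : (V⟦(-1 : ℤ)⟧)⟦(1 : ℤ)⟧ ≅ V := (shiftFunctorCompIsoId C (-1 : ℤ) 1 (by omega)).app V
  refine (cancel_mono e.inv).1 ?_
  rw [zero_comp]
  exact S.A_derived_projective _ (S.t.le_shift (-1) (-1) 0 (by omega) V hV) _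

lemma shift_hom_eq_zero_of_le {m u : ℤ} (h : u + m < 0) {V : C} (hV : S.t.le u V)
    (φ : S.A⟦m⟧ ⟶ V) : φ = 0 := by
  let e : (V⟦-m⟧)⟦m⟧ ≅ V := (shiftFunctorCompIsoId C (-m) m (by omega)).app V
  have hV' : S.t.le (-1) (V⟦-m⟧) := S.t.le_monotone (show u + m ≤ -1 by omega) _
    (S.t.le_shift u (-m) (u + m) (by omega) V hV)
  obtain ⟨χ, hχ⟩ := (shiftFunctor C m).map_surjective (φ ≫ e.inv)
  rw [← cancel_mono e.inv, zero_comp, ← hχ, S.hom_eq_zero_of_le_neg_one hV' χ, Functor.map_zero]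

lemma shift_hom_eq_zero_of_ge {m b : ℤ} (h : 0 < b + m) {V : C} (hV : S.t.ge b V)
    (φ : S.A⟦m⟧ ⟶ V) : φ = 0 :=
  S.t.zero_of_isLE_of_isGE φ (-m) b (by omega)
    ⟨S.t.le_shift 0 m (-m) (by omega) S.A S.connective⟩ ⟨hV⟩

lemma isIso_of_homSurj_homInj {X Y : C} (f : X ⟶ Y) (hsurj : ∀ m : ℤ, HomSurj (S.A⟦m⟧) f)
    (hinj : ∀ m : ℤ, HomInj (S.A⟦m⟧) f) : IsIso f := by
  obtain ⟨Z, _, _, hT⟩ := distinguished_cocone_triangle f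
  refine (Triangle.isZero₃_iff_isIso₁ _ hT).1 (S.generates Z fun n φ => ?_)
  obtain ⟨m, rfl⟩ : ∃ m : ℤ, n = m + 1 := ⟨n - 1, by omega⟩
  exact cone_hom_eq_zero hT ((shiftFunctorAdd' C m 1 (m + 1) rfl).app S.A) (hsurj _) (hinj m) φ

variable [HasFiniteBiproducts C]

lemma le_zero_of_mem_perInterval {n : ℕ} {P : C} (hP : P ∈ perInterval S.A n) : S.t.le 0 P := by
  rw [S.t.le_iff_isLE, S.t.isLE_iff_orthogonal 0 1 rfl]
  exact fun Y f hY => hom_eq_zero_of_mem_perInterval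
    (fun m h0 _ φ => S.shift_hom_eq_zero_of_ge (by omega) hY.ge φ) hP f

lemma shift_hom_biproduct_eq_zero {m r : ℤ} (h : m < r) {N : ℕ}
    (ψ : S.A⟦m⟧ ⟶ ⨁ fun _ : Fin N => S.A⟦r⟧) : ψ = 0 :=
  biproduct.hom_ext _ _ fun _ => by
    rw [zero_comp]
    exact S.shift_hom_eq_zero_of_le (by omega) (S.t.le_shift 0 r (-r) (by omega) S.A S.connective) _

lemma exists_homSurj_shift {Y : C} (r : ℤ) (hY : ∀ m < r, ∀ φ : S.A⟦m⟧ ⟶ Y, φ = 0) :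
    ∃ (N : ℕ) (g : (⨁ fun _ : Fin N => S.A⟦r⟧) ⟶ Y), ∀ m ≤ r, HomSurj (S.A⟦m⟧) g := by
  have := S.homFinite (S.A⟦r⟧) Y
  obtain ⟨N, g, hg⟩ := exists_homSurj_biproduct k (S.A⟦r⟧) Y
  refine ⟨N, g, fun m hm χ => ?_⟩
  obtain rfl | hlt := hm.eq_or_lt
  · exact hg χ
  · exact ⟨0, by rw [zero_comp, hY m hlt χ]⟩

lemma exists_approximation_step {𝓟 : Set C} {P X : C} (hP : P ∈ 𝓟) (r : ℤ) (π : P ⟶ X)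
    (hsurj : ∀ m < r, HomSurj (S.A⟦m⟧) π) (hinj : ∀ m < r - 1, HomInj (S.A⟦m⟧) π) :
    ∃ P' ∈ star 𝓟 (addShift S.A r), ∃ π' : P' ⟶ X,
      (∀ m ≤ r, HomSurj (S.A⟦m⟧) π') ∧ ∀ m < r, HomInj (S.A⟦m⟧) π' := by
  obtain ⟨Cn, ρ, σ, hT⟩ := distinguished_cocone_triangle π
  have hCn : ∀ m < r, ∀ φ : S.A⟦m⟧ ⟶ Cn, φ = 0 := fun m hm φ => by
    obtain ⟨l, rfl⟩ : ∃ l, m = l + 1 := ⟨m - 1, by omega⟩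
    exact cone_hom_eq_zero hT ((shiftFunctorAdd' C l 1 (l + 1) rfl).app S.A) (hsurj _ hm)
      (hinj l (by omega)) φ
  obtain ⟨N, g, hg⟩ := S.exists_homSurj_shift r hCn
  obtain ⟨P', α, β, hT'⟩ := distinguished_cocone_triangle₂ (g ≫ σ)
  obtain ⟨π', hαπ, hβg⟩ : ∃ π' : P' ⟶ X, α ≫ π' = 𝟙 P ≫ π ∧ β ≫ g = π' ≫ ρ :=
    complete_distinguished_triangle_morphism₂ _ _ hT' hT (𝟙 P) g (by
      change (g ≫ σ) ≫ (𝟙 P)⟦(1 : ℤ)⟧' = g ≫ σ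
      rw [CategoryTheory.Functor.map_id, comp_id])
  rw [Category.id_comp] at hαπ
  refine ⟨P', ⟨P, hP, _, inAdd_biproduct _ N, α, β, g ≫ σ, hT'⟩, π',
    fun m hm => homSurj_of_cover hT hT' hαπ hβg (hg m hm),
    fun m hm => homInj_of_cover hT hT' hαπ ((shiftFunctorAdd' C m 1 (m + 1) rfl).app S.A)
      (hg _ (by omega)) (S.shift_hom_biproduct_eq_zero hm)⟩

lemma exists_approximation {X : C} (hX : S.t.le 0 X) (n : ℕ) :
    ∃ P ∈ perInterval S.A n, ∃ π : P ⟶ X,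
      (∀ m : ℤ, m ≤ n → HomSurj (S.A⟦m⟧) π) ∧ ∀ m : ℤ, m < n → HomInj (S.A⟦m⟧) π := by
  induction n with
  | zero =>
    obtain ⟨N, g, hg⟩ :=
      S.exists_homSurj_shift 0 fun m hm φ => S.shift_hom_eq_zero_of_le (by omega) hX φ
    exact ⟨_, inAdd_biproduct _ N, g, fun m hm => hg m (by omega),
      fun m hm ψ _ => S.shift_hom_biproduct_eq_zero (by omega) ψ⟩
  | succ n ih =>
    obtain ⟨P, hP, π, hsurj, hinj⟩ := ih
    obtain ⟨P', hP', π', hsurj', hinj'⟩ := S.exists_approximation_step hP (n + 1) π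
      (fun m hm => hsurj m (by omega)) (fun m hm => hinj m (by omega))
    exact ⟨P', hP', π', fun m hm => hsurj' m (by omega), fun m hm => hinj' m (by omega)⟩

end DGSetup

namespace TruncGEData

variable {C : Type u} [Category.{v} C] [Preadditive C] [HasZeroObject C]
  [HasShift C ℤ] [∀ n : ℤ, (shiftFunctor C n).Additive] [Pretriangulated C]
  {t : TStructure C} {n : ℤ} (T : TruncGEData t n)

lemma η_comp_map {X Y : C} (f : X ⟶ Y) : T.η.app X ≫ T.F.map f = f ≫ T.η.app Y :=
  (T.η.naturality f).symm

lemma hom_ext {X W : C} (hW : t.ge n W) {a b : T.F.obj X ⟶ W}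
    (h : T.η.app X ≫ a = T.η.app X ≫ b) : a = b :=
  (T.adj X W hW).1 h

lemma map_eq_zero_iff {X Y : C} (f : X ⟶ Y) : T.F.map f = 0 ↔ f ≫ T.η.app Y = 0 :=
  ⟨fun h => by rw [← η_comp_map, h, comp_zero],
    fun h => T.hom_ext (T.ge Y) (by rw [η_comp_map, h, comp_zero])⟩

lemma homSurj_η {B X : C} (hB : ∀ Z : C, t.le (n - 2) Z → ∀ φ : B ⟶ Z, φ = 0) :
    HomSurj B (T.η.app X) := fun ψ => by
  obtain ⟨Z, hZ, _, _, hT⟩ := T.tri X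
  exact Triangle.coyoneda_exact₃ _ hT ψ (hB _ (t.le_shift (n - 1) 1 (n - 2) (by omega) Z hZ) _)

lemma le_obj {X : C} {a : ℤ} (hX : t.le a X) (h : n - 2 ≤ a) : t.le a (T.F.obj X) := by
  obtain ⟨Z, hZ, _, _, hT⟩ := T.tri X
  rw [t.le_iff_isLE]
  exact t.isLE₂ _ (rot_of_distTriang _ hT) a ⟨hX⟩
    ⟨t.le_monotone h _ (t.le_shift (n - 1) 1 (n - 2) (by omega) Z hZ)⟩

end TruncGEData

section Truncation

variable {C : Type u} [Category.{v} C] [Preadditive C] [HasZeroObject C]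
  [HasShift C ℤ] [∀ n : ℤ, (shiftFunctor C n).Additive] [Pretriangulated C]
  [HasFiniteBiproducts C] {k : Type w} [Field k] [Linear k C]
  {S : DGSetup k C} {d : ℕ} (T : TruncGEData S.t (1 - (d : ℤ)))

lemma truncGE_obj_mem_Hd {P : C} (hP : P ∈ perInterval S.A d) : T.F.obj P ∈ Hd S.t d :=
  ⟨T.le_obj (S.le_zero_of_mem_perInterval hP) (by omega), T.ge P⟩

lemma exists_truncGE_obj_iso {X : C} (hX : X ∈ Hd S.t d) :
    ∃ P ∈ perInterval S.A d, Nonempty (T.F.obj P ≅ X) := by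
  obtain ⟨P, hP, π, hsurj, hinj⟩ := S.exists_approximation hX.1 d
  obtain ⟨π₁, hπ₁ : T.η.app P ≫ π₁ = π⟩ := (T.adj P X hX.2).2 π
  have hη : ∀ m : ℤ, m < d → HomSurj (S.A⟦m⟧) (T.η.app P) := fun m hm =>
    T.homSurj_η fun Z hZ φ => S.shift_hom_eq_zero_of_le (by omega) hZ φ
  have : IsIso π₁ := by
    refine S.isIso_of_homSurj_homInj π₁ (fun m χ => ?_) (fun m ψ hψ => ?_)
    · by_cases hm : m < d
      · obtain ⟨ξ, rfl⟩ := hsurj m hm.le χ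
        exact ⟨ξ ≫ T.η.app P, by rw [assoc, hπ₁]⟩
      · exact ⟨0, by rw [zero_comp, S.shift_hom_eq_zero_of_ge (by omega) hX.2 χ]⟩
    · by_cases hm : m < d
      · obtain ⟨ψ₀, rfl⟩ := hη m hm ψ
        rw [hinj m hm ψ₀ (by rw [← hπ₁, ← assoc, hψ]), zero_comp]
      · exact S.shift_hom_eq_zero_of_ge (by omega) (T.ge P) ψ
  exact ⟨P, hP, ⟨asIso π₁⟩⟩

lemma exists_truncGE_map_eq {P P' : C} (hP : P ∈ perInterval S.A d)
    (g : T.F.obj P ⟶ T.F.obj P') : ∃ f : P ⟶ P', T.F.map f = g := by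
  obtain ⟨f, hf⟩ := T.homSurj_η (fun Z hZ φ => hom_eq_zero_of_mem_perInterval
    (fun m _ hm ψ => S.shift_hom_eq_zero_of_le (by omega) hZ ψ) hP φ) (T.η.app P ≫ g)
  exact ⟨f, T.hom_ext (T.ge P') (by rw [T.η_comp_map, hf])⟩

lemma truncGE_map_eq_zero_iff {P P' : C} (hP : P ∈ perInterval S.A d) (f : P ⟶ P') :
    T.F.map f = 0 ↔ factorsThruAdd (S.A⟦(d : ℤ)⟧) f := by
  rw [T.map_eq_zero_iff]
  constructor
  · intro hf
    obtain ⟨Z, hZ, ζ, _, hT⟩ := T.tri P'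
    obtain ⟨e, rfl⟩ : ∃ e : P ⟶ Z, f = e ≫ ζ := Triangle.coyoneda_exact₂ _ hT f hf
    obtain ⟨Q, hQ, a, b, rfl⟩ := factorsThruAdd_of_mem_perInterval
      (fun m _ hm φ => S.shift_hom_eq_zero_of_le (by omega) hZ φ) hP e
    exact ⟨Q, hQ, a, b ≫ ζ, assoc a b ζ⟩
  · rintro ⟨Q, hQ, a, b, rfl⟩
    rw [assoc, hom_eq_zero_of_inAdd hQ (fun φ => S.shift_hom_eq_zero_of_ge (by omega) (T.ge P') φ)
      (b ≫ T.η.app P'), comp_zero]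

end Truncation

variable {C : Type u} [Category.{v} C] [Preadditive C] [HasZeroObject C]
  [HasShift C ℤ] [∀ n : ℤ, (shiftFunctor C n).Additive] [Pretriangulated C]
  [HasFiniteBiproducts C] [HasBinaryBiproducts C]
  {k : Type w} [Field k] [Linear k C]

theorem stmt11_general (S : DGSetup k C) (d : ℕ)
    (T : TruncGEData S.t (1 - (d : ℤ))) :
    (∀ P ∈ perInterval S.A d, T.F.obj P ∈ Hd S.t d) ∧
    (∀ X ∈ Hd S.t d, ∃ P ∈ perInterval S.A d, Nonempty (T.F.obj P ≅ X)) ∧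
    (∀ P ∈ perInterval S.A d, ∀ P' ∈ perInterval S.A d,
      ∀ g : T.F.obj P ⟶ T.F.obj P', ∃ f : P ⟶ P', T.F.map f = g) ∧
    (∀ P ∈ perInterval S.A d, ∀ P' ∈ perInterval S.A d, ∀ f : P ⟶ P',
      T.F.map f = 0 ↔ factorsThruAdd (S.A⟦(d : ℤ)⟧) f) :=
  ⟨fun _ hP => truncGE_obj_mem_Hd T hP, fun _ hX => exists_truncGE_obj_iso T hX,
    fun _ hP _ _ g => exists_truncGE_map_eq T hP g,
    fun _ hP _ _ f => truncGE_map_eq_zero_iff T hP f⟩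

/-- The truncation functor `t^{>-d} : per(A)^{[-d,0]} → H^d` takes
values in `H^d`, is dense and full, and its kernel ideal consists exactly of the
morphisms factoring through `add(A⟦d⟧)`; consequently it induces an equivalence
`per(A)^{[-d,0]} / add(A⟦d⟧) ≃ H^d`. -/
theorem stmt11 (S : DGSetup k C) (d : ℕ) (hd : 1 ≤ d) (hA : S.A ∈ Hd S.t d)
    (T : TruncGEData S.t (1 - (d : ℤ))) :
    (∀ P ∈ perInterval S.A d, T.F.obj P ∈ Hd S.t d) ∧
    (∀ X ∈ Hd S.t d, ∃ P ∈ perInterval S.A d, Nonempty (T.F.obj P ≅ X)) ∧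
    (∀ P ∈ perInterval S.A d, ∀ P' ∈ perInterval S.A d,
      ∀ g : T.F.obj P ⟶ T.F.obj P', ∃ f : P ⟶ P', T.F.map f = g) ∧
    (∀ P ∈ perInterval S.A d, ∀ P' ∈ perInterval S.A d, ∀ f : P ⟶ P',
      T.F.map f = 0 ↔ factorsThruAdd (S.A⟦(d : ℤ)⟧) f) :=
  stmt11_general S d T

end Paper
end
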